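/- arXiv:2403.03660 — 2 statements merged into one kernel-verified Lean document; each statement's English description precedes it below -/
import Mathlib

section
/- Let G = G₁ *_H G₂ and S = (G₁)^G ∪ (G₂)^G the set of all conjugates of elements of the factors. Then for every s ∈ S, f(s) ≤ 3, where f is the segment-counting quasi-homomorphism. -/
/-!
If `s = g⁻¹ k g` with `k` in a factor, then its reduced word `x` is, modulo double cosets of `H`,
its own inverse read backwards: `x_{L-1-i} ∈ H x_i⁻¹ H` away from the middle letter. Indeed a
cyclically reduced word is never conjugate into a factor (its powers have unbounded reduced length,
and reduced length is well defined), so the last and first letters of `x` cancel modulo `H` and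
can be peeled off. Hence reflection at the centre of a special form exchanges the positions of `a`
and `a⁻¹`, and with them the `a`-segments and `a⁻¹`-segments of each length. Only segments
touching or crossing the centre escape this, and they have at most three lengths, so
`p_k = m_k` for all but three `k`.
-/

open scoped Pointwise

/-- `x` and `y` lie in different factors. -/
def InDiffFactors {G : Type*} [Group G] (G₁ G₂ : Subgroup G) (x y : G) : Prop :=
  ¬(x ∈ G₁ ∧ y ∈ G₁) ∧ ¬(x ∈ G₂ ∧ y ∈ G₂)

/-- A reduced word in an (internal) amalgamated free product of `G₁` and `G₂` over `H`. -/
def ReducedWord' {G : Type*} [Group G] (G₁ G₂ H : Subgroup G) (w : List G) : Prop :=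
  (∀ x ∈ w, x ∈ (G₁ : Set G) ∪ (G₂ : Set G)) ∧
  w.Chain' (InDiffFactors G₁ G₂) ∧
  (1 < w.length → ∀ x ∈ w, x ∉ H) ∧
  (w.length = 1 → (1 : G) ∉ w)

/-- `G` is the (internal) amalgamated free product `G₁ *_H G₂`: `H = G₁ ⊓ G₂`,
the factors generate, and nonempty reduced words have nontrivial product. -/
def IsAmalgam {G : Type*} [Group G] (G₁ G₂ H : Subgroup G) : Prop :=
  H = G₁ ⊓ G₂ ∧ Subgroup.closure ((G₁ : Set G) ∪ (G₂ : Set G)) = ⊤ ∧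
  ∀ w : List G, ReducedWord' G₁ G₂ H w → w ≠ [] → w.prod ≠ 1

/-- The double coset `H a H`. -/
def DCoset {G : Type*} [Group G] (H : Subgroup G) (a : G) : Set G :=
  (H : Set G) * {a} * (H : Set G)

/-- There is an `a`-segment of length `2k-1` starting at position `j` of the word `w`:
a subword `a x₁ ⋯ x_{2k-1} a` with no `x_i = a`. -/
def IsSegAt {G : Type*} [Group G] (a : G) (w : List G) (k j : ℕ) : Prop :=
  1 ≤ k ∧ w[j]? = some a ∧ w[j + 2 * k]? = some a ∧
    ∀ i, 0 < i → i < 2 * k → w[j + i]? ≠ some a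

/-- `pk a w k` = number of `a`-segments of length `2k-1` in `w`. -/
noncomputable def pk {G : Type*} [Group G] (a : G) (w : List G) (k : ℕ) : ℕ :=
  Set.ncard {j : ℕ | IsSegAt a w k j}

/-- `mk' a w k` = number of `a⁻¹`-segments of length `2k-1` in `w`. -/
noncomputable def mk' {G : Type*} [Group G] (a : G) (w : List G) (k : ℕ) : ℕ :=
  pk a⁻¹ w k

noncomputable def dk {G : Type*} [Group G] (a : G) (w : List G) (k : ℕ) : ℤ :=
  (pk a w k : ℤ) - (mk' a w k : ℤ)

/-- `rk` is the parity of `dk`. -/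
noncomputable def rk {G : Type*} [Group G] (a : G) (w : List G) (k : ℕ) : ℕ :=
  (dk a w k).natAbs % 2

/-- The segment-counting function `f(w) = Σ_k r_k(w)` (all segments have length
at most the length of `w`, so the sum below is the full sum). -/
noncomputable def segf {G : Type*} [Group G] (a : G) (w : List G) : ℕ :=
  ∑ k ∈ Finset.Icc 1 w.length, rk a w k

/-- Data describing the passage from a reduced word `x` to a special form: each
syllable of the form `u * a^θ * v` with `u v ∈ H` (marked `rep i = true`) is replaced
by `a^θ`, with `u`, `v` absorbed into the neighbouring syllables. -/
structure SpecialData {G : Type*} [Group G] (H : Subgroup G) (a : G) (x : List G) where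
  rep : ℕ → Bool
  u : ℕ → G
  v : ℕ → G
  θ : ℕ → ℤ
  hu : ∀ i, u i ∈ H
  hv : ∀ i, v i ∈ H
  hθ : ∀ i, θ i = 1 ∨ θ i = -1
  hrep : ∀ (i : ℕ) (hi : i < x.length), rep i = true → x.get ⟨i, hi⟩ = u i * a ^ θ i * v i
  hnotrep : ∀ i, rep i = false → u i = 1 ∧ v i = 1
  hforced : ∀ (i : ℕ) (hi : i < x.length),
    (∃ u' ∈ H, ∃ v' ∈ H, ∃ θ' : ℤ, (θ' = 1 ∨ θ' = -1) ∧ x.get ⟨i, hi⟩ = u' * a ^ θ' * v') →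
    rep i = true

/-- The special form produced from the reduced word `x` by the data `d`. -/
def SpecialData.word {G : Type*} [Group G] {H : Subgroup G} {a : G} {x : List G}
    (d : SpecialData H a x) : List G :=
  (if x.length ≠ 0 ∧ d.rep 0 = true then [d.u 0] else []) ++
  (List.ofFn fun i : Fin x.length =>
    if d.rep (i : ℕ) = true then a ^ d.θ (i : ℕ)
    else (if (i : ℕ) = 0 then 1 else d.v ((i : ℕ) - 1)) * x.get i *
      (if (i : ℕ) + 1 < x.length then d.u ((i : ℕ) + 1) else 1)) ++
  (if x.length ≠ 0 ∧ d.rep (x.length - 1) = true then [d.v (x.length - 1)] else [])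

/-- `w` is a special form of `g`. -/
def IsSpecialForm {G : Type*} [Group G] (G₁ G₂ H : Subgroup G) (a g : G) (w : List G) : Prop :=
  ∃ (x : List G) (d : SpecialData H a x),
    ReducedWord' G₁ G₂ H x ∧ x.prod = g ∧ w = d.word

section Factors

variable {G : Type*} [Group G] {G₁ G₂ H : Subgroup G} {x y z : G}

def SameFactor (G₁ G₂ : Subgroup G) (x y : G) : Prop :=
  (x ∈ G₁ ∧ y ∈ G₁) ∨ (x ∈ G₂ ∧ y ∈ G₂)

theorem inDiffFactors_iff_not_sameFactor :
    InDiffFactors G₁ G₂ x y ↔ ¬SameFactor G₁ G₂ x y := by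
  unfold InDiffFactors SameFactor
  tauto

theorem InDiffFactors.symm (h : InDiffFactors G₁ G₂ x y) : InDiffFactors G₁ G₂ y x := by
  unfold InDiffFactors at *
  tauto

theorem SameFactor.symm (h : SameFactor G₁ G₂ x y) : SameFactor G₁ G₂ y x := by
  unfold SameFactor at *
  tauto

theorem sameFactor_inv_left : SameFactor G₁ G₂ x⁻¹ y ↔ SameFactor G₁ G₂ x y := by
  simp only [SameFactor, inv_mem_iff]

theorem inDiffFactors_inv_left : InDiffFactors G₁ G₂ x⁻¹ y ↔ InDiffFactors G₁ G₂ x y := by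
  simp only [inDiffFactors_iff_not_sameFactor, sameFactor_inv_left]

theorem SameFactor.mul (h : SameFactor G₁ G₂ x y) :
    SameFactor G₁ G₂ x (x * y) ∧ SameFactor G₁ G₂ y (x * y) := by
  rcases h with ⟨hx, hy⟩ | ⟨hx, hy⟩
  · exact ⟨.inl ⟨hx, mul_mem hx hy⟩, .inl ⟨hy, mul_mem hx hy⟩⟩
  · exact ⟨.inr ⟨hx, mul_mem hx hy⟩, .inr ⟨hy, mul_mem hx hy⟩⟩

theorem inv_mem_union (hx : x ∈ (G₁ : Set G) ∪ (G₂ : Set G)) :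
    x⁻¹ ∈ (G₁ : Set G) ∪ (G₂ : Set G) := by
  rcases hx with hx | hx
  exacts [.inl (inv_mem hx), .inr (inv_mem hx)]

theorem SameFactor.mem_union_right (h : SameFactor G₁ G₂ x y) :
    y ∈ (G₁ : Set G) ∪ (G₂ : Set G) := by
  rcases h with ⟨-, hy⟩ | ⟨-, hy⟩
  exacts [.inl hy, .inr hy]

namespace IsAmalgam

variable (ham : IsAmalgam G₁ G₂ H)
include ham

theorem mem_of_mem_of_mem (h₁ : x ∈ G₁) (h₂ : x ∈ G₂) : x ∈ H := ham.1 ▸ ⟨h₁, h₂⟩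

theorem sameFactor_of_mem (hx : x ∈ H) (hy : y ∈ (G₁ : Set G) ∪ (G₂ : Set G)) :
    SameFactor G₁ G₂ x y := by
  rw [ham.1] at hx
  rcases hy with hy | hy
  exacts [.inl ⟨hx.1, hy⟩, .inr ⟨hx.2, hy⟩]

theorem sameFactor_mul_left (hx : x ∈ H) (hy : y ∈ (G₁ : Set G) ∪ (G₂ : Set G)) :
    SameFactor G₁ G₂ y (x * y) :=
  (ham.sameFactor_of_mem hx hy).mul.2

theorem notMem_of_inDiffFactors (hx : x ∈ (G₁ : Set G) ∪ (G₂ : Set G))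
    (hy : y ∈ (G₁ : Set G) ∪ (G₂ : Set G)) (h : InDiffFactors G₁ G₂ x y) : x ∉ H ∧ y ∉ H := by
  rw [inDiffFactors_iff_not_sameFactor] at h
  exact ⟨fun hxH => h (ham.sameFactor_of_mem hxH hy),
    fun hyH => h (ham.sameFactor_of_mem hyH hx).symm⟩

/-- Outside `H`, an element determines its factor. -/
theorem inDiffFactors_of_sameFactor (hz : z ∉ H) (hyz : SameFactor G₁ G₂ y z)
    (hxy : InDiffFactors G₁ G₂ x y) : InDiffFactors G₁ G₂ x z := by
  refine ⟨fun ⟨hx, hz₁⟩ => ?_, fun ⟨hx, hz₂⟩ => ?_⟩ <;> rcases hyz with ⟨hy, hz'⟩ | ⟨hy, hz'⟩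
  exacts [hxy.1 ⟨hx, hy⟩, hz (ham.mem_of_mem_of_mem hz₁ hz'), hz (ham.mem_of_mem_of_mem hz' hz₂),
    hxy.2 ⟨hx, hy⟩]

end IsAmalgam

end Factors

section ReducedWords

variable {G : Type*} [Group G] {G₁ G₂ H : Subgroup G} {p p' t : G} {q w l₁ l₂ : List G}

namespace ReducedWord'

theorem nil : ReducedWord' G₁ G₂ H [] :=
  ⟨by simp, List.isChain_nil, by simp, by simp⟩

theorem singleton (ht : t ∈ (G₁ : Set G) ∪ (G₂ : Set G)) (h1 : t ≠ 1) :
    ReducedWord' G₁ G₂ H [t] :=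
  ⟨by simpa using ht, List.isChain_singleton t, by simp, by simpa using h1.symm⟩

theorem of_forall (hU : ∀ t ∈ w, t ∈ (G₁ : Set G) ∪ (G₂ : Set G))
    (hc : w.IsChain (InDiffFactors G₁ G₂)) (hH : ∀ t ∈ w, t ∉ H) : ReducedWord' G₁ G₂ H w :=
  ⟨hU, hc, fun _ => hH, fun _ h1 => hH 1 h1 H.one_mem⟩

theorem forall_notMem (hw : ReducedWord' G₁ G₂ H w) (h2 : 2 ≤ w.length) : ∀ t ∈ w, t ∉ H :=
  hw.2.2.1 h2

theorem forall_notMem_of_mem (hw : ReducedWord' G₁ G₂ H w) (hp : p ∈ w) (hpH : p ∉ H) :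
    ∀ t ∈ w, t ∉ H := by
  rcases Nat.lt_or_ge 1 w.length with h2 | h1
  · exact hw.2.2.1 h2
  · obtain ⟨s, rfl⟩ : ∃ s, w = [s] :=
      List.length_eq_one_iff.mp (by have := List.length_pos_of_mem hp; omega)
    simpa [List.mem_singleton.mp hp] using hpH

theorem of_infix (hw : ReducedWord' G₁ G₂ H w) (h : q <:+: w) : ReducedWord' G₁ G₂ H q := by
  have hlen := h.length_le
  refine ⟨fun t ht => hw.1 t (h.subset ht), hw.2.1.infix h,
    fun hq t ht => hw.2.2.1 (by omega) t (h.subset ht), fun hq h1 => ?_⟩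
  rcases Nat.lt_or_ge 1 w.length with hw2 | hw1
  · exact hw.2.2.1 hw2 1 (h.subset h1) H.one_mem
  · exact hw.2.2.2 (by have := List.length_pos_of_mem h1; omega) (h.subset h1)

theorem tail (hw : ReducedWord' G₁ G₂ H (p :: q)) : ReducedWord' G₁ G₂ H q :=
  hw.of_infix (List.suffix_cons p q).isInfix

theorem cons_of_sameFactor (ham : IsAmalgam G₁ G₂ H) (hw : ReducedWord' G₁ G₂ H (p :: q))
    (hp' : p' ∉ H) (hs : SameFactor G₁ G₂ p p') : ReducedWord' G₁ G₂ H (p' :: q) := by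
  refine of_forall ?_ ?_ ?_
  · simp only [List.mem_cons, forall_eq_or_imp]
    exact ⟨hs.mem_union_right, fun t ht => hw.1 t (List.mem_cons_of_mem p ht)⟩
  · have hc := List.isChain_cons.mp hw.2.1
    exact List.isChain_cons.mpr ⟨fun y hy =>
      (ham.inDiffFactors_of_sameFactor hp' hs (hc.1 y hy).symm).symm, hc.2⟩
  · simp only [List.mem_cons, forall_eq_or_imp]
    refine ⟨hp', fun t ht => hw.forall_notMem ?_ t (List.mem_cons_of_mem p ht)⟩
    have := List.length_pos_of_mem ht
    simp only [List.length_cons]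
    omega

theorem mul_cons (ham : IsAmalgam G₁ G₂ H) (hw : ReducedWord' G₁ G₂ H (p :: q)) (hp : p ∉ H)
    (ht : t ∈ H) : ReducedWord' G₁ G₂ H ((t * p) :: q) :=
  hw.cons_of_sameFactor ham (fun h => hp (by simpa using mul_mem (inv_mem ht) h))
    (ham.sameFactor_mul_left ht (hw.1 p List.mem_cons_self))

theorem append (ham : IsAmalgam G₁ G₂ H) (h₁ : ReducedWord' G₁ G₂ H l₁)
    (h₂ : ReducedWord' G₁ G₂ H l₂) (hne₁ : l₁ ≠ []) (hne₂ : l₂ ≠ [])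
    (hj : InDiffFactors G₁ G₂ (l₁.getLast hne₁) (l₂.head hne₂)) :
    ReducedWord' G₁ G₂ H (l₁ ++ l₂) := by
  have hjH := ham.notMem_of_inDiffFactors (h₁.1 _ (List.getLast_mem hne₁))
    (h₂.1 _ (List.head_mem hne₂)) hj
  refine of_forall (fun t ht => ?_) ?_ (fun t ht => ?_)
  · rcases List.mem_append.mp ht with ht | ht
    exacts [h₁.1 t ht, h₂.1 t ht]
  · refine h₁.2.1.append h₂.2.1 fun x hx y hy => ?_
    rw [List.getLast?_eq_some_getLast hne₁, Option.mem_some_iff] at hx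
    rw [List.head?_eq_some_head hne₂, Option.mem_some_iff] at hy
    exact hx ▸ hy ▸ hj
  · rcases List.mem_append.mp ht with ht | ht
    exacts [h₁.forall_notMem_of_mem (List.getLast_mem hne₁) hjH.1 t ht,
      h₂.forall_notMem_of_mem (List.head_mem hne₂) hjH.2 t ht]

end ReducedWord'

def invRev (w : List G) : List G := (w.map (·⁻¹)).reverse

theorem prod_invRev (w : List G) : (invRev w).prod = w.prod⁻¹ :=
  (List.prod_inv_reverse w).symm

theorem length_invRev (w : List G) : (invRev w).length = w.length := by
  simp [invRev]

theorem mem_invRev : t ∈ invRev w ↔ t⁻¹ ∈ w := by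
  simp [invRev]

theorem invRev_ne_nil (hw : w ≠ []) : invRev w ≠ [] := by
  simpa [invRev] using hw

theorem getLast_invRev_cons :
    (invRev (p :: q)).getLast (invRev_ne_nil (List.cons_ne_nil p q)) = p⁻¹ := by
  simp [invRev]

theorem ReducedWord'.invRev (hw : ReducedWord' G₁ G₂ H w) : ReducedWord' G₁ G₂ H (invRev w) := by
  refine ⟨fun t ht => ?_, ?_, fun hl t ht htH => ?_, fun hl h1 => ?_⟩
  · simpa using inv_mem_union (hw.1 _ (mem_invRev.mp ht))
  · show List.IsChain _ _
    rw [_root_.invRev, List.isChain_reverse, List.isChain_map]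
    refine hw.2.1.imp fun x y h => ?_
    rw [inDiffFactors_inv_left]
    exact (inDiffFactors_inv_left.mpr h).symm
  · exact hw.2.2.1 (by rwa [length_invRev] at hl) _ (mem_invRev.mp ht) (inv_mem htH)
  · exact hw.2.2.2 (by rwa [length_invRev] at hl) (by simpa using mem_invRev.mp h1)

theorem ReducedWord'.flatten_replicate {x : List G} (hx : ReducedWord' G₁ G₂ H (x ++ x))
    (hne : x ≠ []) (n : ℕ) :
    ReducedWord' G₁ G₂ H (List.replicate n x).flatten := by
  have hmem : ∀ t ∈ (List.replicate n x).flatten, t ∈ x ++ x := fun t ht => by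
    obtain ⟨l, hl, ht⟩ := List.mem_flatten.mp ht
    exact List.mem_append_left x (List.eq_of_mem_replicate hl ▸ ht)
  have h2 : 2 ≤ (x ++ x).length := by
    have := List.length_pos_of_ne_nil hne
    simp only [List.length_append]
    omega
  refine .of_forall (fun t ht => hx.1 t (hmem t ht)) ?_
    (fun t ht => hx.forall_notMem h2 t (hmem t ht))
  rw [List.isChain_flatten (by simp [hne])]
  exact ⟨fun l hl => List.eq_of_mem_replicate hl ▸ List.IsChain.left_of_append hx.2.1,
    List.isChain_replicate_of_rel n (List.isChain_append.mp hx.2.1).2.2⟩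

end ReducedWords

namespace IsAmalgam

variable {G : Type*} [Group G] {G₁ G₂ H : Subgroup G} (ham : IsAmalgam G₁ G₂ H)
  {p q : G} {u v w x : List G}
include ham

/-- `invRev (p :: u) ++ q :: v` is reduced, so its product is not `1`. -/
theorem prod_ne_of_inDiffFactors (hu : ReducedWord' G₁ G₂ H (p :: u))
    (hv : ReducedWord' G₁ G₂ H (q :: v)) (h : InDiffFactors G₁ G₂ p q) :
    (p :: u).prod ≠ (q :: v).prod := by
  intro heq
  have hred := hu.invRev.append ham hv (invRev_ne_nil (List.cons_ne_nil p u))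
    (List.cons_ne_nil q v) (by rwa [getLast_invRev_cons, List.head_cons, inDiffFactors_inv_left])
  refine ham.2.2 _ hred (by simp) ?_
  rw [List.prod_append, prod_invRev, heq, inv_mul_cancel]

theorem prod_notMem_union (hw : ReducedWord' G₁ G₂ H w) (h2 : 2 ≤ w.length) :
    w.prod ∉ (G₁ : Set G) ∪ (G₂ : Set G) := by
  obtain ⟨p, t, rfl⟩ : ∃ p t, w = p :: t := List.exists_cons_of_length_pos (by omega)
  replace h2 : t ≠ [] := List.ne_nil_of_length_pos (by simp at h2; omega)
  induction t generalizing p with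
  | nil => exact absurd rfl h2
  | cons q t ih =>
    intro hc
    by_cases hs : SameFactor G₁ G₂ p (p :: q :: t).prod
    · have hsame : SameFactor G₁ G₂ p (q :: t).prod := by
        rw [← sameFactor_inv_left] at hs ⊢
        simpa using hs.mul.1
      cases t with
      | nil =>
        exact inDiffFactors_iff_not_sameFactor.mp (List.isChain_cons_cons.mp hw.2.1).1
          (by simpa using hsame)
      | cons r t => exact ih q hw.tail (List.cons_ne_nil r t) hsame.mem_union_right
    · have hc1 : (p :: q :: t).prod ≠ 1 := fun h1 =>
        hs (ham.sameFactor_of_mem (h1 ▸ H.one_mem) (hw.1 p List.mem_cons_self)).symm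
      exact ham.prod_ne_of_inDiffFactors (u := []) (ReducedWord'.singleton hc hc1) hw
        (inDiffFactors_iff_not_sameFactor.mpr fun h => hs h.symm) (by simp)

theorem length_le_one_of_prod_mem (hw : ReducedWord' G₁ G₂ H w)
    (h : w.prod ∈ (G₁ : Set G) ∪ (G₂ : Set G)) : w.length ≤ 1 := by
  by_contra h2
  exact ham.prod_notMem_union hw (by omega) h

theorem length_eq_of_prod_eq (hu : ReducedWord' G₁ G₂ H u) (hv : ReducedWord' G₁ G₂ H v)
    (h : u.prod = v.prod) : u.length = v.length := by
  induction u generalizing v with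
  | nil =>
    rcases eq_or_ne v [] with rfl | hne
    · rfl
    · exact absurd (by simpa using h.symm) (ham.2.2 v hv hne)
  | cons p u ih =>
    obtain ⟨q, v, rfl⟩ : ∃ q v', v = q :: v' := by
      refine List.exists_cons_of_ne_nil fun hv0 => ham.2.2 _ hu (List.cons_ne_nil p u) ?_
      simpa [hv0] using h
    by_cases hs : SameFactor G₁ G₂ p q
    swap
    · exact absurd h (ham.prod_ne_of_inDiffFactors hu hv (inDiffFactors_iff_not_sameFactor.mpr hs))
    have hprod : u.prod = p⁻¹ * q * v.prod := by
      simp only [List.prod_cons] at h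
      rw [mul_assoc, ← h, inv_mul_cancel_left]
    cases u with
    | nil =>
      have := ham.length_le_one_of_prod_mem hv (h ▸ by simpa using hu.1 p List.mem_cons_self)
      simp only [List.length_cons, List.length_nil] at this ⊢
      omega
    | cons p' u =>
    cases v with
    | nil =>
      have := ham.length_le_one_of_prod_mem hu (h ▸ by simpa using hv.1 q List.mem_cons_self)
      simp at this
    | cons q' v =>
    have hq' : q' ∉ H := hv.forall_notMem (by simp) q' (by simp)
    by_cases he : p⁻¹ * q ∈ H
    · have := ih hu.tail (hv.tail.mul_cons ham hq' he) (by simp [hprod, mul_assoc])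
      simpa using this
    · have hsp : SameFactor G₁ G₂ p (p⁻¹ * q) :=
        sameFactor_inv_left.mp (sameFactor_inv_left.mpr hs).mul.1
      refine absurd ?_ (ham.prod_ne_of_inDiffFactors hu.tail
        (hv.cons_of_sameFactor ham he (sameFactor_inv_left.mpr hs).mul.2)
        (ham.inDiffFactors_of_sameFactor he hsp (List.isChain_cons_cons.mp hu.2.1).1.symm))
      simp [hprod]

theorem exists_reducedWord_mul (hw : ReducedWord' G₁ G₂ H w) {s : G}
    (hs : s ∈ (G₁ : Set G) ∪ (G₂ : Set G)) :
    ∃ w', ReducedWord' G₁ G₂ H w' ∧ w'.prod = s * w.prod ∧ w'.length ≤ w.length + 1 := by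
  induction w generalizing s with
  | nil =>
    by_cases h1 : s = 1
    · exact ⟨[], ReducedWord'.nil, by simp [h1], by simp⟩
    · exact ⟨[s], ReducedWord'.singleton hs h1, by simp, by simp⟩
  | cons z t ih =>
    by_cases hsz : SameFactor G₁ G₂ s z
    · by_cases hH : s * z ∈ H
      · obtain ⟨w', hw', hprod, hlen⟩ := ih hw.tail (hsz.mul.2.mem_union_right)
        exact ⟨w', hw', by simp [hprod, mul_assoc], by simp; omega⟩
      · exact ⟨(s * z) :: t, hw.cons_of_sameFactor ham hH hsz.mul.2, by simp [mul_assoc],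
          by simp⟩
    · have hidf := inDiffFactors_iff_not_sameFactor.mpr hsz
      have hsH := (ham.notMem_of_inDiffFactors hs (hw.1 z List.mem_cons_self) hidf).1
      exact ⟨[s] ++ z :: t, (ReducedWord'.singleton hs fun h1 => hsH (h1 ▸ H.one_mem)).append
        ham hw (List.cons_ne_nil _ _) (List.cons_ne_nil _ _) hidf, by simp, by simp⟩

theorem exists_reducedWord_of_forall_mem (hv : ∀ t ∈ v, t ∈ (G₁ : Set G) ∪ (G₂ : Set G)) :
    ∃ w, ReducedWord' G₁ G₂ H w ∧ w.prod = v.prod ∧ w.length ≤ v.length := by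
  induction v with
  | nil => exact ⟨[], ReducedWord'.nil, rfl, le_rfl⟩
  | cons s v ih =>
    obtain ⟨w, hw, hprod, hlen⟩ := ih fun t ht => hv t (List.mem_cons_of_mem s ht)
    obtain ⟨w', hw', hprod', hlen'⟩ := ham.exists_reducedWord_mul hw (hv s List.mem_cons_self)
    exact ⟨w', hw', by simp [hprod', hprod], by simp; omega⟩

theorem exists_list_prod_eq (g : G) :
    ∃ l : List G, (∀ t ∈ l, t ∈ (G₁ : Set G) ∪ (G₂ : Set G)) ∧ l.prod = g := by
  have hg : g ∈ (Subgroup.closure ((G₁ : Set G) ∪ (G₂ : Set G))).toSubmonoid := by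
    simp [ham.2.1]
  rw [Subgroup.closure_toSubmonoid] at hg
  obtain ⟨l, hl, rfl⟩ := Submonoid.exists_list_of_mem_closure hg
  refine ⟨l, fun t ht => ?_, rfl⟩
  rcases hl t ht with h | h
  exacts [h, by simpa using inv_mem_union h]

/-- A cyclically reduced word is not conjugate into a factor: its `n`-th power has reduced
length `n * x.length`, while a conjugate `g⁻¹ k ^ n g` has one of length at most `2 |g| + 1`. -/
theorem conj_notMem_union (hx : ReducedWord' G₁ G₂ H (x ++ x)) (hne : x ≠ []) (g : G) :
    g * x.prod * g⁻¹ ∉ (G₁ : Set G) ∪ (G₂ : Set G) := by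
  intro hk
  set k := g * x.prod * g⁻¹
  obtain ⟨l, hl, rfl⟩ := ham.exists_list_prod_eq g
  set n := 2 * l.length + 2
  have hkn : k ^ n ∈ (G₁ : Set G) ∪ (G₂ : Set G) := by
    rcases hk with h | h
    exacts [.inl (pow_mem h n), .inr (pow_mem h n)]
  obtain ⟨W, hW, hWprod, hWlen⟩ := ham.exists_reducedWord_of_forall_mem
    (v := invRev l ++ k ^ n :: l) fun t ht => by
      rcases List.mem_append.mp ht with ht | ht
      · simpa using inv_mem_union (hl _ (mem_invRev.mp ht))
      · rcases List.mem_cons.mp ht with rfl | ht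
        exacts [hkn, hl t ht]
  have hxprod : x.prod = l.prod⁻¹ * k * l.prod⁻¹⁻¹ := by simp [k, mul_assoc]
  have hlen := ham.length_eq_of_prod_eq (hx.flatten_replicate hne n) hW (by
    rw [hWprod, List.prod_flatten, List.map_replicate, List.prod_replicate, hxprod, conj_pow]
    simp [prod_invRev, mul_assoc])
  simp only [List.length_flatten, List.map_replicate, List.sum_replicate, smul_eq_mul] at hlen
  simp only [List.length_append, List.length_cons, length_invRev] at hWlen
  have := Nat.le_mul_of_pos_right n (List.length_pos_of_ne_nil hne)
  omega

end IsAmalgam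

section DoubleCosets

variable {G : Type*} [Group G] {H : Subgroup G} {a b h₁ h₂ p t z : G} {x y : List G}

theorem mem_dcoset_iff : t ∈ DCoset H b ↔ ∃ h₁ ∈ H, ∃ h₂ ∈ H, t = h₁ * b * h₂ :=
  DoubleCoset.mem_doubleCoset

theorem mem_dcoset_iff_eq : t ∈ DCoset H b ↔ DCoset H t = DCoset H b :=
  ⟨DoubleCoset.doubleCoset_eq_of_mem, fun h => h ▸ DoubleCoset.mem_doubleCoset_self H H t⟩

theorem dcoset_mul_mul (hh₁ : h₁ ∈ H) (hh₂ : h₂ ∈ H) : DCoset H (h₁ * t * h₂) = DCoset H t :=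
  mem_dcoset_iff_eq.mp (mem_dcoset_iff.mpr ⟨h₁, hh₁, h₂, hh₂, rfl⟩)

theorem dcoset_inv (t : G) : DCoset H t⁻¹ = (DCoset H t)⁻¹ := by
  simp only [DCoset, mul_inv_rev, Set.inv_singleton, inv_coe_set, mul_assoc]

theorem notMem_of_dcoset_ne (hd : DCoset H a ≠ DCoset H a⁻¹) : a ∉ H := fun ha => by
  refine hd ?_
  have h₁ := dcoset_mul_mul (t := 1) ha H.one_mem
  have h₂ := dcoset_mul_mul (t := 1) (inv_mem ha) H.one_mem
  simp only [mul_one] at h₁ h₂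
  rw [h₁, h₂]

def IsSkewPalindrome (H : Subgroup G) (x : List G) : Prop :=
  ∀ i j (hi : i < x.length) (hj : j < x.length), i + j + 1 = x.length → i ≠ j →
    DCoset H x[j] = (DCoset H x[i])⁻¹

theorem isSkewPalindrome_of_length_le_one (h : x.length ≤ 1) : IsSkewPalindrome H x := by
  intro i j _ _ _ _
  omega

theorem IsSkewPalindrome.of_mul_cons (ht : t ∈ H) (hx : IsSkewPalindrome H ((t * p) :: x)) :
    IsSkewPalindrome H (p :: x) := by
  have key : ∀ i (hi : i < x.length + 1), DCoset H ((t * p) :: x)[i] = DCoset H (p :: x)[i] := by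
    rintro (_ | i) hi
    · simpa using dcoset_mul_mul ht H.one_mem
    · rfl
  intro i j hi hj hs hne
  rw [← key, ← key]
  exact hx i j hi hj hs hne

theorem IsSkewPalindrome.cons_append (hy : IsSkewPalindrome H y)
    (hz : DCoset H z = (DCoset H p)⁻¹) : IsSkewPalindrome H (p :: (y ++ [z])) := by
  intro i j hi hj hs hne
  simp only [List.length_cons, List.length_append, List.length_nil] at hi hj hs
  rcases i with _ | i <;> rcases j with _ | j
  · omega
  · obtain rfl : j = y.length := by omega
    simpa using hz
  · obtain rfl : i = y.length := by omega
    simp [hz]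
  · simp only [List.getElem_cons_succ]
    rw [List.getElem_append_left (by omega), List.getElem_append_left (by omega)]
    exact hy i j (by omega) (by omega) (by omega) (by omega)

end DoubleCosets

namespace IsAmalgam

variable {G : Type*} [Group G] {G₁ G₂ H : Subgroup G} (ham : IsAmalgam G₁ G₂ H)
  {p z : G} {x y : List G}
include ham

theorem sameFactor_of_conj_mem (hx : ReducedWord' G₁ G₂ H (p :: (y ++ [z]))) (g : G)
    (hg : g * (p :: (y ++ [z])).prod * g⁻¹ ∈ (G₁ : Set G) ∪ (G₂ : Set G)) :
    SameFactor G₁ G₂ z p := by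
  by_contra h
  refine ham.conj_notMem_union (hx.append ham hx (List.cons_ne_nil _ _) (List.cons_ne_nil _ _)
    ?_) (List.cons_ne_nil _ _) g hg
  simpa [inDiffFactors_iff_not_sameFactor] using h

theorem mul_mem_of_conj_mem (hx : ReducedWord' G₁ G₂ H (p :: (y ++ [z]))) (hy : y ≠ [])
    (g : G) (hg : g * (p :: (y ++ [z])).prod * g⁻¹ ∈ (G₁ : Set G) ∪ (G₂ : Set G)) :
    z * p ∈ H := by
  have hs := ham.sameFactor_of_conj_mem hx g hg
  by_contra hH
  have hw : ReducedWord' G₁ G₂ H ((z * p) :: y) :=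
    (hx.of_infix ⟨[], [z], rfl⟩).cons_of_sameFactor ham hH hs.mul.2
  have hjunc : InDiffFactors G₁ G₂ (y.getLast hy) (z * p) :=
    ham.inDiffFactors_of_sameFactor hH hs.mul.1
      ((List.isChain_cons.mp hx.2.1).2.rel_getLast_head_of_append hy (List.cons_ne_nil z []))
  refine ham.conj_notMem_union (hw.append ham hw (List.cons_ne_nil _ _) (List.cons_ne_nil _ _)
    (by simpa [List.getLast_cons hy] using hjunc)) (List.cons_ne_nil _ _) (g * z⁻¹) ?_
  convert hg using 1
  simp only [List.prod_cons, List.prod_append, List.prod_nil, mul_one]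
  group

theorem isSkewPalindrome_of_conj_mem (hx : ReducedWord' G₁ G₂ H x) (g : G)
    (hg : g * x.prod * g⁻¹ ∈ (G₁ : Set G) ∪ (G₂ : Set G)) : IsSkewPalindrome H x := by
  induction hlen : x.length using Nat.strong_induction_on generalizing x g with
  | _ n ih =>
  rcases Nat.lt_or_ge x.length 2 with h2 | h2
  · exact isSkewPalindrome_of_length_le_one (by omega)
  obtain ⟨p, y, z, rfl⟩ : ∃ p y z, x = p :: (y ++ [z]) := by
    obtain ⟨p, t, rfl⟩ := List.exists_cons_of_length_pos (by omega : 0 < x.length)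
    have ht : t ≠ [] := List.ne_nil_of_length_pos (by simp at h2; omega)
    exact ⟨p, t.dropLast, t.getLast ht, by rw [List.dropLast_append_getLast]⟩
  obtain ⟨q, y, rfl⟩ : ∃ q y', y = q :: y' := by
    refine List.exists_cons_of_ne_nil fun hy => ?_
    subst hy
    exact inDiffFactors_iff_not_sameFactor.mp (List.isChain_cons_cons.mp hx.2.1).1
      (ham.sameFactor_of_conj_mem hx g hg).symm
  have hH := ham.mul_mem_of_conj_mem hx (List.cons_ne_nil q y) g hg
  have hq : q ∉ H := hx.forall_notMem (by simp) q (by simp)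
  have hx' := (hx.of_infix ⟨[p], [z], rfl⟩).mul_cons ham hq hH
  have hpal := ih _ (by simp [← hlen]) hx' (g * z⁻¹) (by
    convert hg using 1
    simp only [List.prod_cons, List.prod_append, List.prod_nil, mul_one]
    group) rfl
  refine (hpal.of_mul_cons hH).cons_append ?_
  rw [← dcoset_inv, ← dcoset_mul_mul (t := p⁻¹) hH H.one_mem]
  congr 1
  group

end IsAmalgam

section Segments

def IsSeg (A : Set ℕ) (k j : ℕ) : Prop :=
  1 ≤ k ∧ j ∈ A ∧ j + 2 * k ∈ A ∧ ∀ i, 0 < i → i < 2 * k → j + i ∉ A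

variable {A B C D : Set ℕ} {k k' j j' M : ℕ}

theorem IsSeg.notMem (h : IsSeg A k j) {p : ℕ} (h₁ : j < p) (h₂ : p < j + 2 * k) : p ∉ A := by
  simpa [Nat.add_sub_cancel' h₁.le] using h.2.2.2 (p - j) (by omega) (by omega)

theorem IsSeg.eq_of_overlap (h : IsSeg A k j) (h' : IsSeg A k' j') (h₁ : j < j' + 2 * k')
    (h₂ : j' < j + 2 * k) : k = k' := by
  have hk := h.1
  have hk' := h'.1
  obtain rfl : j = j' := by
    by_contra hne
    rcases Nat.lt_or_gt_of_ne hne with hlt | hlt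
    exacts [h.notMem hlt h₂ h'.2.1, h'.notMem hlt h₁ h.2.1]
  by_contra hne
  rcases Nat.lt_or_gt_of_ne hne with hlt | hlt
  exacts [h'.notMem (by omega) (by omega) h.2.2.1, h.notMem (by omega) (by omega) h'.2.2.1]

theorem IsSeg.mirror (h : IsSeg C k j) (hM : j + 2 * k ≤ M) (hj : M - j ∈ D)
    (hjk : M - (j + 2 * k) ∈ D) (hDC : ∀ p, M - (j + 2 * k) < p → p < M - j → p ∈ D → M - p ∈ C) :
    IsSeg D k (M - (j + 2 * k)) := by
  refine ⟨h.1, hjk, by rwa [show M - (j + 2 * k) + 2 * k = M - j by omega], fun i hi0 hi hp => ?_⟩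
  exact h.notMem (p := M - (M - (j + 2 * k) + i)) (by omega) (by omega)
    (hDC _ (by omega) (by omega) hp)

theorem exists_forall_eq_of_unique {α : Type*} [Nonempty α] {P : α → Prop}
    (hP : ∀ k k', P k → P k' → k = k') : ∃ s, ∀ k, P k → k = s := by
  by_cases h : ∃ s, P s
  · obtain ⟨s, hs⟩ := h
    exact ⟨s, fun k hk => hP k s hk hs⟩
  · exact ⟨Classical.arbitrary α, fun k hk => (h ⟨k, hk⟩).elim⟩

/-- Reflection `j ↦ M - j` carries the segments of `A` to those of `B`, except those of at most
three lengths: the `A`-segments starting or ending at the centre `M / 2`, and the `B`-segments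
around it. -/
theorem exists_ncard_isSeg_eq_of_center_notMem (hA : ∀ j ∈ A, j ≤ M) (hB : ∀ j ∈ B, j ≤ M)
    (hAB : ∀ j ≤ M, 2 * j ≠ M → (j ∈ A ↔ M - j ∈ B)) (hcB : ∀ j, 2 * j = M → j ∉ B) :
    ∃ S : Finset ℕ, S.card ≤ 3 ∧ ∀ k ∉ S, {j | IsSeg A k j}.ncard = {j | IsSeg B k j}.ncard := by
  have hBA : ∀ j ∈ B, M - j ∈ A := fun j hj => by
    have hjM := hB j hj
    refine (hAB (M - j) (by omega) fun h => hcB j (by omega) hj).mpr ?_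
    rwa [Nat.sub_sub_self hjM]
  obtain ⟨s₁, hs₁⟩ := exists_forall_eq_of_unique (P := fun k => ∃ j, IsSeg A k j ∧ 2 * j = M)
    fun k k' ⟨j, h, hj⟩ ⟨j', h', hj'⟩ => h.eq_of_overlap h' (by have := h'.1; omega)
      (by have := h.1; omega)
  obtain ⟨s₂, hs₂⟩ := exists_forall_eq_of_unique
    (P := fun k => ∃ j, IsSeg A k j ∧ 2 * (j + 2 * k) = M)
    fun k k' ⟨j, h, hj⟩ ⟨j', h', hj'⟩ => h.eq_of_overlap h' (by have := h.1; omega)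
      (by have := h'.1; omega)
  obtain ⟨s₃, hs₃⟩ := exists_forall_eq_of_unique
    (P := fun k => ∃ j, IsSeg B k j ∧ 2 * j < M ∧ M < 2 * (j + 2 * k))
    fun k k' ⟨j, h, hj⟩ ⟨j', h', hj'⟩ => h.eq_of_overlap h' (by omega) (by omega)
  refine ⟨{s₁, s₂, s₃}, Finset.card_le_three, fun k hk => ?_⟩
  simp only [Finset.mem_insert, Finset.mem_singleton, not_or] at hk
  have himage : {j | IsSeg A k j} = (fun j => M - (j + 2 * k)) '' {j | IsSeg B k j} := by
    ext j
    constructor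
    · intro h
      have hM := hA _ h.2.2.1
      have hj₁ : 2 * j ≠ M := fun hj => hk.1 (hs₁ k ⟨j, h, hj⟩)
      have hj₂ : 2 * (j + 2 * k) ≠ M := fun hj => hk.2.1 (hs₂ k ⟨j, h, hj⟩)
      refine ⟨M - (j + 2 * k), h.mirror hM ((hAB j (by omega) hj₁).mp h.2.1)
        ((hAB _ hM hj₂).mp h.2.2.1) fun p _ _ hp => hBA p hp, by simp only; omega⟩
    · rintro ⟨j, h, rfl⟩
      refine h.mirror (hB _ h.2.2.1) (hBA _ h.2.1) (hBA _ h.2.2.1) fun p hp₁ hp₂ hp => ?_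
      have hc : 2 * p ≠ M := fun hc => hk.2.2 (hs₃ k ⟨j, h, by omega, by omega⟩)
      exact (hAB p (by omega) hc).mp hp
  rw [himage, Set.InjOn.ncard_image]
  intro j₁ h₁ j₂ h₂ heq
  have := hB _ h₁.2.2.1
  have := hB _ h₂.2.2.1
  simp only at heq
  omega

theorem exists_ncard_isSeg_eq (hA : ∀ j ∈ A, j ≤ M) (hB : ∀ j ∈ B, j ≤ M)
    (hAB : ∀ j ≤ M, 2 * j ≠ M → (j ∈ A ↔ M - j ∈ B)) (hdisj : Disjoint A B) :
    ∃ S : Finset ℕ, S.card ≤ 3 ∧ ∀ k ∉ S, {j | IsSeg A k j}.ncard = {j | IsSeg B k j}.ncard := by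
  by_cases hc : ∃ c ∈ B, 2 * c = M
  · obtain ⟨c, hcB, hc⟩ := hc
    have hBA : ∀ j ≤ M, 2 * j ≠ M → (j ∈ B ↔ M - j ∈ A) := fun j hj hjc => by
      rw [hAB (M - j) (by omega) (by omega), Nat.sub_sub_self hj]
    obtain ⟨S, hS, hk⟩ := exists_ncard_isSeg_eq_of_center_notMem hB hA hBA
      fun j hj hjA => hdisj.notMem_of_mem_left hjA ((show j = c by omega) ▸ hcB)
    exact ⟨S, hS, fun k hkS => (hk k hkS).symm⟩
  · exact exists_ncard_isSeg_eq_of_center_notMem hA hB hAB fun j hj hjB => hc ⟨j, hjB, hj⟩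

end Segments

section SegmentCount

variable {G : Type*} [Group G] {a : G} {w : List G}

theorem pk_eq_ncard_isSeg (a : G) (w : List G) (k : ℕ) :
    pk a w k = {j | IsSeg {i | w[i]? = some a} k j}.ncard := rfl

theorem segf_le_card (S : Finset ℕ) (h : ∀ k ∉ S, pk a w k = mk' a w k) : segf a w ≤ S.card := by
  calc segf a w ≤ ∑ k ∈ Finset.Icc 1 w.length, if k ∈ S then 1 else 0 := by
        refine Finset.sum_le_sum fun k _ => ?_
        split_ifs with hk
        · exact Nat.le_of_lt_succ (Nat.mod_lt _ two_pos)
        · simp [rk, dk, h k hk]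
    _ = ((Finset.Icc 1 w.length).filter (· ∈ S)).card := (Finset.card_filter _ _).symm
    _ ≤ S.card := Finset.card_le_card fun k hk => (Finset.mem_filter.mp hk).2

end SegmentCount

theorem List.getElem?_append_append_eq_some_iff {α : Type*} {l₁ l₂ l₃ : List α} {b : α}
    (h₁ : b ∉ l₁) (h₃ : b ∉ l₃) {j : ℕ} :
    (l₁ ++ l₂ ++ l₃)[j]? = some b ↔ ∃ i, j = l₁.length + i ∧ l₂[i]? = some b := by
  constructor
  · intro h
    rcases Nat.lt_or_ge j l₁.length with hj | hj
    · rw [List.append_assoc, List.getElem?_append_left hj] at h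
      exact absurd (List.mem_of_getElem? h) h₁
    obtain ⟨i, rfl⟩ := Nat.exists_eq_add_of_le hj
    rw [List.append_assoc, List.getElem?_append_right hj, Nat.add_sub_cancel_left] at h
    rcases Nat.lt_or_ge i l₂.length with hi | hi
    · exact ⟨i, rfl, by rwa [List.getElem?_append_left hi] at h⟩
    · rw [List.getElem?_append_right hi] at h
      exact absurd (List.mem_of_getElem? h) h₃
  · rintro ⟨i, rfl, h⟩
    rw [List.append_assoc, List.getElem?_append_right (by omega), Nat.add_sub_cancel_left,
      List.getElem?_append_left (List.getElem?_eq_some_iff.mp h).1]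
    exact h

namespace SpecialData

variable {G : Type*} [Group G] {H : Subgroup G} {a b t : G} {x : List G}
  (d : SpecialData H a x)

def syllable (i : Fin x.length) : G :=
  if d.rep (i : ℕ) = true then a ^ d.θ (i : ℕ)
  else (if (i : ℕ) = 0 then 1 else d.v ((i : ℕ) - 1)) * x.get i *
    (if (i : ℕ) + 1 < x.length then d.u ((i : ℕ) + 1) else 1)

def initial : List G := if x.length ≠ 0 ∧ d.rep 0 = true then [d.u 0] else []

def terminal : List G :=
  if x.length ≠ 0 ∧ d.rep (x.length - 1) = true then [d.v (x.length - 1)] else []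

theorem word_eq : d.word = d.initial ++ List.ofFn d.syllable ++ d.terminal := rfl

theorem mem_of_mem_initial (ht : t ∈ d.initial) : t ∈ H := by
  unfold initial at ht
  split_ifs at ht
  · exact List.mem_singleton.mp ht ▸ d.hu 0
  · simp at ht

theorem mem_of_mem_terminal (ht : t ∈ d.terminal) : t ∈ H := by
  unfold terminal at ht
  split_ifs at ht
  · exact List.mem_singleton.mp ht ▸ d.hv _
  · simp at ht

theorem syllable_eq_iff (hd : DCoset H a ≠ DCoset H a⁻¹) (hb : b = a ∨ b = a⁻¹)
    (i : Fin x.length) : d.syllable i = b ↔ DCoset H (x.get i) = DCoset H b := by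
  have hforced : DCoset H (x.get i) = DCoset H b → d.rep i = true := fun h => by
    obtain ⟨h₁, hh₁, h₂, hh₂, he⟩ := mem_dcoset_iff.mp (mem_dcoset_iff_eq.mpr h)
    refine d.hforced i i.2 ⟨h₁, hh₁, h₂, hh₂, ?_⟩
    rcases hb with rfl | rfl
    exacts [⟨1, .inl rfl, by simpa using he⟩, ⟨-1, .inr rfl, by simpa using he⟩]
  by_cases hrep : d.rep i = true
  · rw [syllable, if_pos hrep, d.hrep i i.2 hrep, dcoset_mul_mul (d.hu i) (d.hv i)]
    refine ⟨congrArg _, fun h => ?_⟩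
    rcases d.hθ i with hθ | hθ <;> rcases hb with rfl | rfl <;> simp only [hθ, zpow_one,
      zpow_neg] at h ⊢
    exacts [(hd h).elim, (hd h.symm).elim]
  · have hsyl : DCoset H (d.syllable i) = DCoset H (x.get i) := by
      rw [syllable, if_neg hrep]
      exact dcoset_mul_mul (by split_ifs <;> simp [d.hv]) (by split_ifs <;> simp [d.hu])
    exact iff_of_false (fun h => hrep (hforced (h ▸ hsyl).symm)) (fun h => hrep (hforced h))

variable (hd : DCoset H a ≠ DCoset H a⁻¹)
include hd

theorem getElem?_word_eq_some_iff (hb : b = a ∨ b = a⁻¹) {j : ℕ} :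
    d.word[j]? = some b ↔
      ∃ i : Fin x.length, j = d.initial.length + i ∧ DCoset H (x.get i) = DCoset H b := by
  have hbH : b ∉ H := by
    rcases hb with rfl | rfl
    exacts [notMem_of_dcoset_ne hd, inv_mem_iff.not.mpr (notMem_of_dcoset_ne hd)]
  rw [word_eq, List.getElem?_append_append_eq_some_iff (fun h => hbH (d.mem_of_mem_initial h))
    (fun h => hbH (d.mem_of_mem_terminal h))]
  simp only [List.getElem?_ofFn, Option.dite_none_right_eq_some, Option.some.injEq,
    ← d.syllable_eq_iff hd hb]
  exact ⟨fun ⟨i, hj, hi, h⟩ => ⟨⟨i, hi⟩, hj, h⟩, fun ⟨i, hj, h⟩ => ⟨i, hj, i.2, h⟩⟩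

theorem getElem?_word_reflect (hpal : IsSkewPalindrome H x) (hb : b = a ∨ b = a⁻¹) {j : ℕ}
    (hj : d.word[j]? = some b) (hc : 2 * j ≠ 2 * d.initial.length + x.length - 1) :
    j ≤ 2 * d.initial.length + x.length - 1 ∧
      d.word[2 * d.initial.length + x.length - 1 - j]? = some b⁻¹ := by
  obtain ⟨i, rfl, hi⟩ := (d.getElem?_word_eq_some_iff hd hb).mp hj
  have hb' : b⁻¹ = a ∨ b⁻¹ = a⁻¹ := by
    rcases hb with rfl | rfl
    exacts [.inr rfl, .inl (inv_inv a)]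
  refine ⟨by omega, (d.getElem?_word_eq_some_iff hd hb').mpr
    ⟨⟨x.length - 1 - i, by omega⟩, by simp only; omega, ?_⟩⟩
  rw [dcoset_inv, ← hi]
  exact hpal i (x.length - 1 - i) i.2 (by omega) (by omega) (by omega)

theorem exists_pk_eq_mk' (hpal : IsSkewPalindrome H x) :
    ∃ S : Finset ℕ, S.card ≤ 3 ∧ ∀ k ∉ S, pk a d.word k = mk' a d.word k := by
  set M := 2 * d.initial.length + x.length - 1
  have hbound : ∀ b, b = a ∨ b = a⁻¹ → ∀ j, d.word[j]? = some b → j ≤ M := fun b hb j hj => by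
    by_cases hc : 2 * j = M
    · omega
    · exact (d.getElem?_word_reflect hd hpal hb hj hc).1
  have hreflect : ∀ j ≤ M, 2 * j ≠ M → (d.word[j]? = some a ↔ d.word[M - j]? = some a⁻¹) :=
    fun j hjM hc => ⟨fun hj => (d.getElem?_word_reflect hd hpal (.inl rfl) hj hc).2, fun hj => by
      have := (d.getElem?_word_reflect hd hpal (.inr rfl) hj (by omega)).2
      rwa [inv_inv, Nat.sub_sub_self hjM] at this⟩
  have hdisj : Disjoint {j : ℕ | d.word[j]? = some a} {j : ℕ | d.word[j]? = some a⁻¹} :=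
    Set.disjoint_left.mpr fun j (hA : _ = _) (hB : _ = _) =>
      hd (congrArg (DCoset H) (Option.some_inj.mp (hA.symm.trans hB)))
  obtain ⟨S, hS, hseg⟩ := exists_ncard_isSeg_eq (hbound a (.inl rfl)) (hbound a⁻¹ (.inr rfl))
    hreflect hdisj
  refine ⟨S, hS, fun k hk => ?_⟩
  rw [mk', pk_eq_ncard_isSeg, pk_eq_ncard_isSeg]
  exact hseg k hk

end SpecialData

theorem segf_le_three_on_conjugates_general {G : Type*} [Group G] (G₁ G₂ H : Subgroup G) (a : G)
    (ham : IsAmalgam G₁ G₂ H)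
    (hd : DCoset H a ≠ DCoset H a⁻¹)
    (s : G) (hs : s ∈ {x : G | ∃ g k : G, (k ∈ G₁ ∨ k ∈ G₂) ∧ x = g⁻¹ * k * g})
    (w : List G) (hw : IsSpecialForm G₁ G₂ H a s w) :
    segf a w ≤ 3 := by
  obtain ⟨x, d, hx, rfl, rfl⟩ := hw
  obtain ⟨g, k, hk, hxk⟩ := hs
  have hpal := ham.isSkewPalindrome_of_conj_mem hx g (by simpa [hxk, mul_assoc] using hk)
  obtain ⟨S, hS, hpm⟩ := d.exists_pk_eq_mk' hd hpal
  exact (segf_le_card S hpm).trans hS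

/-- For every conjugate `s` of an element of a factor, `f s ≤ 3`. -/
theorem segf_le_three_on_conjugates {G : Type*} [Group G] (G₁ G₂ H : Subgroup G) (a : G)
    (ham : IsAmalgam G₁ G₂ H) (ha : a ∈ (G₁ : Set G) ∪ (G₂ : Set G))
    (hd : DCoset H a ≠ DCoset H a⁻¹)
    (s : G) (hs : s ∈ {x : G | ∃ g k : G, (k ∈ G₁ ∨ k ∈ G₂) ∧ x = g⁻¹ * k * g})
    (w : List G) (hw : IsSpecialForm G₁ G₂ H a s w) :
    segf a w ≤ 3 :=
  segf_le_three_on_conjugates_general G₁ G₂ H a ham hd s hs w hw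
end

section
/- Let G be a group with a normal subgroup H such that both H and G/H have finite C-width. Then G has finite C-width. -/
/-- A subset `S` of a group is conjugation invariant if it is closed under
conjugation by all elements of the group. -/
def ConjInvariant {G : Type*} [Group G] (S : Set G) : Prop :=
  ∀ g s : G, s ∈ S → g⁻¹ * s * g ∈ S

/-- A group has finite width with respect to `S` if there is `n` such that every
element is a product of at most `n` elements of `S ∪ S⁻¹`. -/
def HasFiniteWidth {G : Type*} [Group G] (S : Set G) : Prop :=
  ∃ n : ℕ, ∀ g : G, ∃ l : List G, (∀ x ∈ l, x ∈ S ∪ S⁻¹) ∧ l.prod = g ∧ l.length ≤ n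

/-- A group has finite `C`-width if it has finite width with respect to every
conjugation invariant generating set. -/
def FiniteCWidth (G : Type*) [Group G] : Prop :=
  ∀ S : Set G, Subgroup.closure S = ⊤ → ConjInvariant S → HasFiniteWidth S

/-!
Let `S` be a conjugation-invariant generating set of `G`. Its image generates `G ⧸ H` and is
conjugation invariant, so every coset of `H` has a representative `v` of `S`-length at most `n`.
Rewriting a word in `S` along these representatives (Schreier) shows that the elements of `H` of
`S`-length at most `2n + 1` generate `H`; they form a conjugation-invariant set, so every element of
`H` has `S`-length at most `(2n + 1) m`. Then `g = v (v⁻¹ g)` has `S`-length at most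
`n + (2n + 1) m`.
-/

open scoped Pointwise

section WordBall

variable {G K : Type*} [Group G] [Group K]

def wordBall (S : Set G) (n : ℕ) : Set G := insert 1 (S ∪ S⁻¹) ^ n

variable {S T : Set G} {k m n : ℕ}

lemma wordBall_one : wordBall S 1 = insert 1 (S ∪ S⁻¹) := pow_one _

lemma wordBall_add : wordBall S (m + n) = wordBall S m * wordBall S n := pow_add _ _ _

lemma wordBall_mono (hST : S ⊆ T) : wordBall S n ⊆ wordBall T n :=
  Set.pow_subset_pow_left <|
    Set.insert_subset_insert (Set.union_subset_union hST (Set.inv_subset_inv.2 hST))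

lemma wordBall_mono_right (hmn : m ≤ n) : wordBall S m ⊆ wordBall S n :=
  Set.pow_subset_pow_right (Set.mem_insert _ _) hmn

lemma one_mem_wordBall : (1 : G) ∈ wordBall S n := Set.one_mem_pow (Set.mem_insert _ _)

@[simp]
lemma inv_wordBall : (wordBall S n)⁻¹ = wordBall S n := by
  rw [wordBall, ← inv_pow, Set.inv_insert, Set.union_inv, inv_inv, Set.union_comm, inv_one]

lemma inv_mem_wordBall {g : G} (hg : g ∈ wordBall S n) : g⁻¹ ∈ wordBall S n := by
  rw [← inv_wordBall]
  exact Set.inv_mem_inv.2 hg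

lemma image_wordBall (f : G →* K) : f '' wordBall S n = wordBall (f '' S) n := by
  rw [wordBall, Set.image_pow, Set.image_insert_eq, Set.image_union, Set.image_inv, map_one,
    wordBall]

lemma wordBall_subset_of_subset (hT : T ⊆ wordBall S k) : wordBall T m ⊆ wordBall S (k * m) := by
  have hletters : insert 1 (T ∪ T⁻¹) ⊆ wordBall S k :=
    Set.insert_subset one_mem_wordBall
      (Set.union_subset hT fun t ht ↦ inv_inv t ▸ inv_mem_wordBall (hT ht))
  exact (Set.pow_subset_pow_left hletters).trans (pow_mul _ _ _).symm.subset

lemma image_wordBall_preimage_wordBall_subset (f : K →* G) :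
    f '' wordBall (f ⁻¹' wordBall S k) m ⊆ wordBall S (k * m) := by
  rw [image_wordBall]
  exact wordBall_subset_of_subset (Set.image_preimage_subset _ _)

lemma mem_wordBall_iff {g : G} :
    g ∈ wordBall S n ↔ ∃ l : List G, (∀ x ∈ l, x ∈ S ∪ S⁻¹) ∧ l.prod = g ∧ l.length ≤ n := by
  constructor
  · induction n generalizing g with
    | zero => rintro rfl; exact ⟨[], by simp, rfl, le_rfl⟩
    | succ n ih =>
      rw [wordBall, pow_succ]
      rintro ⟨x, hx, a, ha, rfl⟩
      obtain ⟨l, hl, rfl, hlen⟩ := ih hx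
      rcases ha with rfl | ha
      · exact ⟨l, hl, (mul_one _).symm, by omega⟩
      · exact ⟨l ++ [a], by simpa [or_imp, forall_and] using ⟨hl, ha⟩, by simp,
        by simp only [List.length_append, List.length_singleton]; omega⟩
  · rintro ⟨l, hl, rfl, hlen⟩
    refine wordBall_mono_right hlen ?_
    induction l with
    | nil => exact one_mem_wordBall
    | cons a l ih =>
      rw [List.prod_cons, List.length_cons, add_comm, wordBall_add, wordBall_one]
      simp only [List.mem_cons, forall_eq_or_imp] at hl
      simp only [List.length_cons] at hlen
      exact Set.mul_mem_mul (Or.inr hl.1) (ih hl.2 (by omega))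

lemma hasFiniteWidth_iff (S : Set G) : HasFiniteWidth S ↔ ∃ n, wordBall S n = Set.univ := by
  simp only [HasFiniteWidth, Set.eq_univ_iff_forall, mem_wordBall_iff]

end WordBall

section ConjInvariant

variable {G K : Type*} [Group G] [Group K] {S : Set G}

lemma ConjInvariant.image (hS : ConjInvariant S) {f : G →* K} (hf : Function.Surjective f) :
    ConjInvariant (f '' S) := by
  rintro k _ ⟨s, hs, rfl⟩
  obtain ⟨g, rfl⟩ := hf k
  exact ⟨g⁻¹ * s * g, hS g s hs, by simp⟩

lemma ConjInvariant.preimage (hS : ConjInvariant S) (f : K →* G) : ConjInvariant (f ⁻¹' S) := by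
  intro k t ht
  simpa using hS (f k) (f t) ht

lemma ConjInvariant.wordBall (hS : ConjInvariant S) {n : ℕ} : ConjInvariant (wordBall S n) := by
  intro g s hs
  let c : G →* G := (MulAut.conj g⁻¹).toMonoidHom
  have hcS : c '' S ⊆ S := by
    rintro _ ⟨t, ht, rfl⟩
    simpa [c] using hS g t ht
  have hcs : c s ∈ _root_.wordBall S n :=
    wordBall_mono hcS (image_wordBall c ▸ Set.mem_image_of_mem c hs)
  simpa [c] using hcs

end ConjInvariant

section Extension

variable {G : Type*} [Group G] {S : Set G} {H : Subgroup G} {n : ℕ}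

lemma exists_mem_wordBall_inv_mul_mem [H.Normal]
    (hn : wordBall (QuotientGroup.mk' H '' S) n = Set.univ) (g : G) :
    ∃ v ∈ wordBall S n, v⁻¹ * g ∈ H := by
  rw [← image_wordBall, Set.eq_univ_iff_forall] at hn
  obtain ⟨v, hv, hvg⟩ := hn g
  exact ⟨v, hv, QuotientGroup.eq.1 hvg⟩

/-- A bounded-length form of Schreier's lemma. -/
theorem closure_preimage_wordBall_eq_top (hS : Subgroup.closure S = ⊤)
    (hrep : ∀ g : G, ∃ v ∈ wordBall S n, v⁻¹ * g ∈ H) :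
    Subgroup.closure (H.subtype ⁻¹' wordBall S (2 * n + 1)) = ⊤ := by
  set T := H.subtype ⁻¹' wordBall S (2 * n + 1)
  let P : G → Prop := fun g ↦
    ∀ v ∈ wordBall S n, ∀ hg : v⁻¹ * g ∈ H, (⟨v⁻¹ * g, hg⟩ : H) ∈ Subgroup.closure T
  -- `v⁻¹ (a g) = (v⁻¹ a v') (v'⁻¹ g)`, where `v'` represents the coset of `g`.
  have mul_left : ∀ a ∈ wordBall S 1, ∀ g, P g → P (a * g) := by
    intro a ha g ih v hv hag
    obtain ⟨v', hv', hg'⟩ := hrep g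
    have hgen : v⁻¹ * a * v' ∈ H := by
      simpa [mul_assoc] using H.mul_mem hag (H.inv_mem hg')
    have hsplit : (⟨v⁻¹ * (a * g), hag⟩ : H) = ⟨v⁻¹ * a * v', hgen⟩ * ⟨v'⁻¹ * g, hg'⟩ :=
      Subtype.ext (by simp [mul_assoc])
    rw [hsplit]
    refine mul_mem (Subgroup.subset_closure ?_) (ih v' hv' hg')
    show v⁻¹ * a * v' ∈ wordBall S (2 * n + 1)
    rw [show 2 * n + 1 = n + 1 + n by ring, wordBall_add, wordBall_add]
    exact Set.mul_mem_mul (Set.mul_mem_mul (inv_mem_wordBall hv) ha) hv'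
  have hP : ∀ g, P g := by
    intro g
    have hg : g ∈ Subgroup.closure S := hS ▸ Subgroup.mem_top g
    induction hg using Subgroup.closure_induction_left with
    | one =>
      intro v hv _
      exact Subgroup.subset_closure
        (wordBall_mono_right (m := n) (by omega) (by simpa using inv_mem_wordBall hv))
    | mul_left s hs g _ ih => exact mul_left s (by simp [wordBall_one, hs]) g ih
    | inv_mul_cancel s hs g _ ih => exact mul_left s⁻¹ (by simp [wordBall_one, hs]) g ih
  rw [eq_top_iff]
  rintro ⟨h, hh⟩ -
  simpa using hP h 1 one_mem_wordBall (by simpa using hh)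

end Extension

/-- Finite `C`-width is closed under extensions: if `H ◁ G` and both `H` and `G ⧸ H`
have finite `C`-width, then so does `G`. -/
theorem finiteCWidth_of_extension {G : Type*} [Group G] (H : Subgroup G) [H.Normal]
    (hH : FiniteCWidth H) (hQ : FiniteCWidth (G ⧸ H)) : FiniteCWidth G := by
  intro S hS hconj
  have hπ := QuotientGroup.mk'_surjective H
  have hSQ : Subgroup.closure (QuotientGroup.mk' H '' S) = ⊤ := by
    rw [← MonoidHom.map_closure, hS, Subgroup.map_top_of_surjective _ hπ]
  obtain ⟨n, hn⟩ := (hasFiniteWidth_iff _).1 (hQ _ hSQ (hconj.image hπ))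
  have hrep := exists_mem_wordBall_inv_mul_mem hn
  obtain ⟨m, hm⟩ := (hasFiniteWidth_iff _).1
    (hH _ (closure_preimage_wordBall_eq_top hS hrep) (hconj.wordBall.preimage H.subtype))
  refine (hasFiniteWidth_iff S).2 ⟨n + (2 * n + 1) * m, Set.eq_univ_of_forall fun g ↦ ?_⟩
  obtain ⟨v, hv, hvg⟩ := hrep g
  have hh : v⁻¹ * g ∈ wordBall S ((2 * n + 1) * m) :=
    image_wordBall_preimage_wordBall_subset H.subtype ⟨⟨v⁻¹ * g, hvg⟩, hm ▸ trivial, rfl⟩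
  rw [wordBall_add]
  exact ⟨v, hv, v⁻¹ * g, hh, mul_inv_cancel_left v g⟩
end
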